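/- arXiv:2509.23079 — 2 statements merged into one kernel-verified Lean document; each statement's English description precedes it below -/
import Mathlib

section
/- Let F/ℚ be a finite separable extension and V a finite-dimensional F-vector space. If b : V × V → ℚ is a ℚ-bilinear symmetric form satisfying b(f·x, y) = b(x, f·y) for all f ∈ F and x, y ∈ V, then there exists a unique F-bilinear symmetric form B : V × V → F such that tr_{F/ℚ}(B(x,y)) = b(x,y) for all x, y ∈ V. -/
/-!
Over a finite separable extension `L/K` the trace form is nondegenerate, so every `K`-linear
functional on `L` is `c ↦ tr (a * c)` for a unique `a ∈ L`. Applied to `c ↦ φ (c • m)`, this lifts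
a `K`-linear functional `φ` on an `L`-module to the unique `L`-linear functional with trace `φ`.
Lifting `y ↦ b x y` for every `x` gives `B`; the adjointness of `b` makes `B` linear in `x`, and
uniqueness of lifts gives both the symmetry of `B` and its uniqueness.
-/

namespace Algebra

variable {K L : Type*} [Field K] [Field L] [Algebra K L]

theorem trace_apply_mul {M : Type*} [AddCommGroup M] [Module L M] (Φ : M →ₗ[L] L) (m : M)
    (c : L) : trace K L (Φ m * c) = trace K L (Φ (c • m)) := by
  rw [map_smul, smul_eq_mul, mul_comm]

variable [FiniteDimensional K L] [Algebra.IsSeparable K L]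

theorem eq_of_forall_trace_mul_eq {x y : L}
    (h : ∀ c, trace K L (x * c) = trace K L (y * c)) : x = y :=
  sub_eq_zero.mp <| (traceForm_nondegenerate K L).1 (x - y) fun c => by
    simp [traceForm_apply, h]

theorem trace_toDual_symm_traceForm_mul (g : Module.Dual K L) (c : L) :
    trace K L (((traceForm K L).toDual (traceForm_nondegenerate K L)).symm g * c) = g c := by
  rw [← traceForm_apply, LinearMap.BilinForm.apply_toDual_symm_apply]

section Ext

variable {M N : Type*} [AddCommGroup M] [Module L M] [AddCommGroup N] [Module L N]

theorem ext_of_forall_trace_apply_eq {Φ Ψ : M →ₗ[L] L}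
    (h : ∀ m, trace K L (Φ m) = trace K L (Ψ m)) : Φ = Ψ :=
  LinearMap.ext fun m => eq_of_forall_trace_mul_eq (K := K) fun c => by
    rw [trace_apply_mul, trace_apply_mul, h]

theorem ext₂_of_forall_trace_apply_eq {B B' : M →ₗ[L] N →ₗ[L] L}
    (h : ∀ x y, trace K L (B x y) = trace K L (B' x y)) : B = B' :=
  LinearMap.ext fun x => ext_of_forall_trace_apply_eq (h x)

theorem apply_comm_of_forall_trace_apply_comm {B : M →ₗ[L] M →ₗ[L] L}
    (h : ∀ x y, trace K L (B x y) = trace K L (B y x)) (x y : M) : B x y = B y x :=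
  LinearMap.congr_fun₂ (ext₂_of_forall_trace_apply_eq (B' := B.flip) h) x y

end Ext

section Lift

variable {M N : Type*} [AddCommGroup M] [Module K M] [Module L M]
  [AddCommGroup N] [Module K N] [Module L N] [IsScalarTower K L N]

noncomputable def liftOfTrace (φ : N →ₗ[K] K) : N →ₗ[L] L where
  toFun y := ((traceForm K L).toDual (traceForm_nondegenerate K L)).symm
    (φ ∘ₗ (LinearMap.toSpanSingleton L N y).restrictScalars K)
  map_add' y y' := eq_of_forall_trace_mul_eq (K := K) fun c => by
    rw [add_mul, map_add, trace_toDual_symm_traceForm_mul, trace_toDual_symm_traceForm_mul,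
      trace_toDual_symm_traceForm_mul]
    simp [smul_add]
  map_smul' f y := eq_of_forall_trace_mul_eq (K := K) fun c => by
    rw [RingHom.id_apply, smul_eq_mul, mul_comm f, mul_assoc, trace_toDual_symm_traceForm_mul,
      trace_toDual_symm_traceForm_mul]
    simp [mul_smul, mul_comm f c]

theorem trace_liftOfTrace_mul (φ : N →ₗ[K] K) (y : N) (c : L) :
    trace K L (liftOfTrace (L := L) φ y * c) = φ (c • y) := by
  simp only [liftOfTrace, LinearMap.coe_mk, AddHom.coe_mk, trace_toDual_symm_traceForm_mul]
  rfl

theorem trace_liftOfTrace (φ : N →ₗ[K] K) (y : N) :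
    trace K L (liftOfTrace (L := L) φ y) = φ y := by
  simpa using trace_liftOfTrace_mul (L := L) φ y 1

noncomputable def bilinLiftOfTrace (b : M →ₗ[K] N →ₗ[K] K)
    (hb : ∀ (f : L) x y, b (f • x) y = b x (f • y)) : M →ₗ[L] N →ₗ[L] L where
  toFun x := liftOfTrace (b x)
  map_add' x x' := ext_of_forall_trace_apply_eq (K := K) fun y => by
    simp [trace_liftOfTrace]
  map_smul' f x := ext_of_forall_trace_apply_eq (K := K) fun y => by
    rw [RingHom.id_apply, LinearMap.smul_apply, smul_eq_mul, mul_comm, trace_liftOfTrace_mul,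
      trace_liftOfTrace, hb]

theorem trace_bilinLiftOfTrace (b : M →ₗ[K] N →ₗ[K] K)
    (hb : ∀ (f : L) x y, b (f • x) y = b x (f • y)) (x : M) (y : N) :
    trace K L (bilinLiftOfTrace b hb x y) = b x y :=
  trace_liftOfTrace (b x) y

end Lift

end Algebra

theorem exists_unique_F_bilinear_lift_of_trace_general
    (F : Type*) [Field F] [Algebra ℚ F] [FiniteDimensional ℚ F]
    (V : Type*) [AddCommGroup V] [Module ℚ V] [Module F V] [IsScalarTower ℚ F V]
    (b : V →ₗ[ℚ] V →ₗ[ℚ] ℚ)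
    (hsymm : ∀ x y : V, b x y = b y x)
    (hadj : ∀ (f : F) (x y : V), b (f • x) y = b x (f • y)) :
    ∃! B : V →ₗ[F] V →ₗ[F] F,
      (∀ x y : V, B x y = B y x) ∧
      (∀ x y : V, Algebra.trace ℚ F (B x y) = b x y) := by
  have htrace := Algebra.trace_bilinLiftOfTrace b hadj
  refine ⟨Algebra.bilinLiftOfTrace b hadj, ⟨?_, htrace⟩, fun B ⟨_, hB⟩ => ?_⟩
  · exact Algebra.apply_comm_of_forall_trace_apply_comm fun x y => by rw [htrace, htrace, hsymm]
  · exact Algebra.ext₂_of_forall_trace_apply_eq fun x y => by rw [hB, htrace]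

/-- Let `F/ℚ` be a finite (separable) extension and `V` a
finite-dimensional `F`-vector space.  If `b` is a symmetric `ℚ`-bilinear form on `V`
satisfying `b (f • x) y = b x (f • y)` for all `f ∈ F`, then there exists a unique
symmetric `F`-bilinear form `B : V × V → F` with `tr_{F/ℚ} (B x y) = b x y`. -/
theorem exists_unique_F_bilinear_lift_of_trace
    (F : Type*) [Field F] [Algebra ℚ F] [FiniteDimensional ℚ F]
    (V : Type*) [AddCommGroup V] [Module ℚ V] [Module F V] [IsScalarTower ℚ F V]
    [FiniteDimensional F V]
    (b : V →ₗ[ℚ] V →ₗ[ℚ] ℚ)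
    (hsymm : ∀ x y : V, b x y = b y x)
    (hadj : ∀ (f : F) (x y : V), b (f • x) y = b x (f • y)) :
    ∃! B : V →ₗ[F] V →ₗ[F] F,
      (∀ x y : V, B x y = B y x) ∧
      (∀ x y : V, Algebra.trace ℚ F (B x y) = b x y) :=
  exists_unique_F_bilinear_lift_of_trace_general F V b hsymm hadj
end

section
/- Let K be a CM field. Then there exists an element t ∈ K such that K = ℚ(t) and t·ι(t) = 1, where ι is the complex conjugation involution of K. -/
/-!
Take a primitive element `α` of `K` over `k`; since `σ ≠ 1`, `σ α ≠ α`. For every `c ∈ k` the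
element `t_c = (α + c) / (σ α + c)` satisfies `t_c · σ t_c = 1`, because `σ` is an involution.
As `K` has only finitely many intermediate fields and `k` is infinite, two of them, `t_c` and
`t_d`, generate the same field `L`. The relations `α + c = t_c (σ α + c)` and
`α + d = t_d (σ α + d)` form a linear system for `(α, σ α)` over `L` which can be solved in `L`,
so `α ∈ L` and `L = K`.
-/

open IntermediateField

theorem AlgEquiv.involutive_of_finrank_eq_two {F K : Type*} [Field F] [Field K] [Algebra F K]
    (h : Module.finrank F K = 2) (σ : K ≃ₐ[F] K) : Function.Involutive σ := by
  have : FiniteDimensional F K := Module.finite_of_finrank_eq_succ h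
  have hle : orderOf σ ≤ 2 := orderOf_le_card_univ.trans (h ▸ AlgEquiv.card_le)
  have hpos : 0 < orderOf σ := orderOf_pos σ
  have hσσ : σ * σ = 1 := by
    rw [← sq, ← orderOf_dvd_iff_pow_eq_one]
    interval_cases orderOf σ <;> norm_num
  exact fun x => by rw [← AlgEquiv.mul_apply, hσσ, AlgEquiv.one_apply]

theorem Subfield.mem_of_add_eq_mul_add {K : Type*} [Field K] {L : Subfield K} {x y u v c d : K}
    (hu : u ∈ L) (hv : v ∈ L) (hc : c ∈ L) (hd : d ∈ L) (hcd : c ≠ d) (hxy : x ≠ y)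
    (hxc : x + c = u * (y + c)) (hxd : x + d = v * (y + d)) : x ∈ L := by
  have huv : u - v ≠ 0 := by
    intro huv
    have : (u - 1) * (c - d) = 0 := by linear_combination hxd - hxc - (y + d) * huv
    rcases mul_eq_zero.mp this with hu1 | hcd0
    · exact hxy (by linear_combination hxc + (y + c) * hu1)
    · exact hcd (sub_eq_zero.mp hcd0)
  have hy : y = (c - d - u * c + v * d) / (u - v) := by
    rw [eq_div_iff huv]
    linear_combination hxd - hxc
  have hyL : y ∈ L := hy ▸ L.div_mem (L.add_mem (L.sub_mem (L.sub_mem hc hd) (L.mul_mem hu hc))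
    (L.mul_mem hv hd)) (L.sub_mem hu hv)
  rw [show x = u * (y + c) - c by linear_combination hxc]
  exact L.sub_mem (L.mul_mem hu (L.add_mem hyL hc)) hc

section

variable {k K : Type*} [Field k] [Field K] [Algebra k K]

theorem AlgEquiv.apply_ne_self_of_adjoin_simple_eq_top [Algebra.IsAlgebraic k K]
    {σ : K ≃ₐ[k] K} (hσ : σ ≠ 1) {α : K} (hα : k⟮α⟯ = ⊤) : σ α ≠ α := by
  intro hfix
  apply hσ
  have hext : (σ : K →ₐ[k] K) = AlgHom.id k K :=
    AlgHom.ext_of_adjoin_eq_top (adjoin_eq_top_iff.mp hα) (by simpa using hfix)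
  exact AlgEquiv.ext fun x => DFunLike.congr_fun hext x

theorem exists_adjoin_simple_eq_top_mul_apply_eq_one [Infinite k] [Algebra.IsAlgebraic k K]
    (hprim : ∃ α : K, k⟮α⟯ = ⊤) (σ : K ≃ₐ[k] K) (hσ : σ ≠ 1) (hinv : Function.Involutive σ) :
    ∃ t : K, k⟮t⟯ = ⊤ ∧ t * σ t = 1 := by
  obtain ⟨α, hα⟩ := hprim
  have hσα : σ α ≠ α := AlgEquiv.apply_ne_self_of_adjoin_simple_eq_top hσ hα
  -- `σ` swaps `α + c` and `σ α + c`, so neither vanishes unless both do, forcing `σ α = α`.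
  have hden : ∀ c : k, σ α + algebraMap k K c ≠ 0 ∧ α + algebraMap k K c ≠ 0 := by
    intro c
    have hswap : σ (σ α + algebraMap k K c) = α + algebraMap k K c := by
      rw [map_add, hinv, AlgEquiv.commutes]
    have hiff : σ α + algebraMap k K c = 0 ↔ α + algebraMap k K c = 0 := by
      rw [← hswap, EmbeddingLike.map_eq_zero_iff]
    have hne : σ α + algebraMap k K c ≠ 0 := fun h => hσα (by linear_combination h - hiff.mp h)
    exact ⟨hne, hiff.not.mp hne⟩
  set t : k → K := fun c => (α + algebraMap k K c) / (σ α + algebraMap k K c) with ht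
  have hnorm : ∀ c, t c * σ (t c) = 1 := by
    intro c
    rw [ht, map_div₀, map_add, map_add, hinv, AlgEquiv.commutes]
    field_simp [(hden c).1, (hden c).2]
  have := Field.finite_intermediateField_of_exists_primitive_element k K ⟨α, hα⟩
  obtain ⟨c, d, hcd, hadj⟩ := Finite.exists_ne_map_eq_of_infinite fun c => k⟮t c⟯
  refine ⟨t c, eq_top_iff.mpr (hα ▸ adjoin_simple_le_iff.mpr ?_), hnorm c⟩
  refine Subfield.mem_of_add_eq_mul_add (L := (k⟮t c⟯).toSubfield) (y := σ α)
    (mem_adjoin_simple_self k (t c)) (hadj ▸ mem_adjoin_simple_self k (t d))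
    (algebraMap_mem _ c) (algebraMap_mem _ d) ((algebraMap k K).injective.ne hcd) hσα.symm
    (div_mul_cancel₀ _ (hden c).1).symm (div_mul_cancel₀ _ (hden d).1).symm

end

theorem exists_primitive_element_of_norm_one_general
    (F K : Type*) [Field F] [Field K] [NumberField K] [Algebra F K]
    (hrank : Module.finrank F K = 2)
    (ι : K ≃ₐ[F] K) (hne : ι ≠ AlgEquiv.refl) :
    ∃ t : K, Algebra.adjoin ℚ {t} = ⊤ ∧ t * ι t = 1 := by
  let σ : K ≃ₐ[ℚ] K := AlgEquiv.ofRingEquiv (f := ι.toRingEquiv) fun q => by simp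
  have hσ : σ ≠ 1 := fun h => hne (AlgEquiv.ext fun x => DFunLike.congr_fun h x)
  obtain ⟨t, ht, hnorm⟩ := exists_adjoin_simple_eq_top_mul_apply_eq_one
    (Field.exists_primitive_element ℚ K) σ hσ (ι.involutive_of_finrank_eq_two hrank)
  exact ⟨t, adjoin_eq_top_iff.mp ht, hnorm⟩

/-- Let `K` be a CM field (totally imaginary quadratic extension
of a totally real number field `F`) with complex-conjugation involution `ι`, the
nontrivial element of `Gal(K/F)`.  Then there exists `t ∈ K` with `K = ℚ(t)` and
`t * ι t = 1`. -/
theorem exists_primitive_element_of_norm_one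
    (F K : Type*) [Field F] [NumberField F] [Field K] [NumberField K] [Algebra F K]
    (htotreal : ∀ (σ : F →+* ℂ) (x : F), (σ x).im = 0)
    (hrank : Module.finrank F K = 2)
    (htotimag : IsEmpty (K →+* ℝ))
    (ι : K ≃ₐ[F] K) (hne : ι ≠ AlgEquiv.refl) :
    ∃ t : K, Algebra.adjoin ℚ {t} = ⊤ ∧ t * ι t = 1 :=
  exists_primitive_element_of_norm_one_general F K hrank ι hne
end
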